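/- Suppose 0 < α < 1, ε > 0, and for all z ∈ [σ^ε, κ₀σ^{2α−2−ε}] the conditional probability bound P(Z₂ > Λz/σ | Z₁ = ±z) ≤ e^{−ε₀σ^{α−2}z} holds, with Z₁ ~ N(0, v_σ) where v_σ = Θ(σ^{2α−2}). Then ∫_{σ^ε}^{κ₀σ^{2α−2−ε}} e^z P(Z₂ > Λz/σ | Z₁ = z) p_{Z₁}(z)dz + ∫_{σ^ε}^{κ₀σ^{2α−2−ε}} e^z P(Z₂ > Λz/σ | Z₁ = −z) p_{Z₁}(z)dz = O(e^{−(ε₀/2)σ^{α−2+ε}}) = o(σ^{1−α}) as σ → 0. -/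

import Mathlib

open MeasureTheory Real Filter Topology

/-!
Once `ε₀σ^{α-2} ≥ 2`, the tail bound `e^{-ε₀σ^{α-2}z}` absorbs the factor `e^z` at the cost of half
its rate, and once `v_σ ≥ 1/(2π)` the Gaussian density is at most `1`. The integrand is then
dominated by `2e^{-(ε₀/2)σ^{α-2}z}`, whose integral over `z ≥ σ^ε` is at most
`2e^{-(ε₀/2)σ^{α-2+ε}}`. Since `α - 2 + ε < 0`, this decays faster than any power of `σ`.
-/

lemma setIntegral_Icc_le_of_le_exp_neg_mul {f : ℝ → ℝ} {K c A B : ℝ} (hK : 0 ≤ K)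
    (hc : 0 < c) (hf₀ : ∀ z ∈ Set.Icc A B, 0 ≤ f z)
    (hf : ∀ z ∈ Set.Icc A B, f z ≤ K * exp (-c * z)) :
    ∫ z in Set.Icc A B, f z ≤ K * exp (-c * A) / c := by
  have hg : IntegrableOn (fun z => K * exp (-c * z)) (Set.Ici A) :=
    (integrableOn_Ici_iff_integrableOn_Ioi).mpr
      ((integrableOn_exp_mul_Ioi (neg_lt_zero.mpr hc) A).const_mul K)
  calc ∫ z in Set.Icc A B, f z
      ≤ ∫ z in Set.Icc A B, K * exp (-c * z) :=
        setIntegral_mono_of_nonneg hf₀ hf (hg.mono_set Set.Icc_subset_Ici_self)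
    _ ≤ ∫ z in Set.Ici A, K * exp (-c * z) :=
        setIntegral_mono_set hg (.of_forall fun z => by positivity)
          Set.Icc_subset_Ici_self.eventuallyLE
    _ = K * exp (-c * A) / c := by
        rw [integral_Ici_eq_integral_Ioi, integral_const_mul,
          integral_exp_mul_Ioi (neg_lt_zero.mpr hc)]
        field_simp

lemma gaussian_density_nonneg {v : ℝ} (hv : 0 ≤ v) (z : ℝ) :
    0 ≤ (2 * π * v) ^ (-(1:ℝ)/2) * exp (-z^2/(2 * v)) := by
  positivity

lemma gaussian_density_le_one {v : ℝ} (hv : 1 ≤ 2 * π * v) (z : ℝ) :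
    (2 * π * v) ^ (-(1:ℝ)/2) * exp (-z^2/(2 * v)) ≤ 1 := by
  have hv₀ : 0 < v := by nlinarith [pi_pos]
  refine mul_le_one₀ (rpow_le_one_of_one_le_of_nonpos hv (by norm_num)) (exp_pos _).le ?_
  exact exp_le_one_iff.mpr
    (div_nonpos_of_nonpos_of_nonneg (by nlinarith [sq_nonneg z]) (by positivity))

lemma setIntegral_exp_mul_gaussian_le {q : ℝ → ℝ} {K a v A B : ℝ} (hK : 0 ≤ K) (ha : 2 ≤ a)
    (hA : 0 ≤ A) (hv : 1 ≤ 2 * π * v) (hq₀ : ∀ z ∈ Set.Icc A B, 0 ≤ q z)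
    (hq : ∀ z ∈ Set.Icc A B, q z ≤ K * exp (-a * z)) :
    ∫ z in Set.Icc A B, exp z * q z * ((2 * π * v) ^ (-(1:ℝ)/2) * exp (-z^2/(2 * v)))
      ≤ K * exp (-(a/2) * A) := by
  have hv₀ : 0 ≤ v := by nlinarith [pi_pos]
  have hbound : ∀ z ∈ Set.Icc A B,
      exp z * q z * ((2 * π * v) ^ (-(1:ℝ)/2) * exp (-z^2/(2 * v)))
        ≤ K * exp (-(a/2) * z) := by
    intro z hz
    have hz₀ : 0 ≤ z := hA.trans hz.1
    calc exp z * q z * ((2 * π * v) ^ (-(1:ℝ)/2) * exp (-z^2/(2 * v)))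
        ≤ exp z * (K * exp (-a * z)) * 1 :=
          mul_le_mul (mul_le_mul_of_nonneg_left (hq z hz) (exp_pos z).le)
            (gaussian_density_le_one hv z) (gaussian_density_nonneg hv₀ z) (by positivity)
      _ = K * exp (z - a * z) := by rw [sub_eq_add_neg, exp_add, neg_mul]; ring
      _ ≤ K * exp (-(a/2) * z) := by gcongr; nlinarith
  calc _ ≤ K * exp (-(a/2) * A) / (a/2) :=
        setIntegral_Icc_le_of_le_exp_neg_mul hK (by linarith)
          (fun z hz => mul_nonneg (mul_nonneg (exp_pos z).le (hq₀ z hz))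
            (gaussian_density_nonneg hv₀ z)) hbound
    _ ≤ K * exp (-(a/2) * A) := div_le_self (by positivity) (by linarith)

lemma tendsto_exp_neg_mul_rpow_div_rpow_nhdsGT_zero {p : ℝ} (hp : p < 0) {k : ℝ} (hk : 0 < k)
    (q : ℝ) : Tendsto (fun σ => exp (-k * σ ^ p) / σ ^ q) (𝓝[>] 0) (𝓝 0) := by
  refine ((tendsto_rpow_mul_exp_neg_mul_atTop_nhds_zero (-q/p) k hk).comp
    (tendsto_rpow_neg_nhdsGT_zero hp)).congr' ?_
  filter_upwards [self_mem_nhdsWithin] with σ (hσ : 0 < σ)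
  rw [Function.comp_apply, ← rpow_mul hσ.le, mul_div_cancel₀ _ hp.ne, rpow_neg hσ.le]
  ring

theorem stmt_14_general (α εc ε₀ κ₀ : ℝ) (hα1 : α < 1)
    (hεc2 : εc < 2 - α) (hε₀ : 0 < ε₀)
    (v : ℝ → ℝ) (c₁ c₂ : ℝ) (hc₁ : 0 < c₁)
    (hv : ∀ᶠ σ in 𝓝[>] (0:ℝ), c₁ * σ ^ (2*α - 2) ≤ v σ ∧ v σ ≤ c₂ * σ ^ (2*α - 2))
    (qp qm : ℝ → ℝ → ℝ)
    (hq : ∀ᶠ σ in 𝓝[>] (0:ℝ), ∀ z ∈ Set.Icc (σ ^ εc) (κ₀ * σ ^ (2*α - 2 - εc)),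
      (0 ≤ qp σ z ∧ qp σ z ≤ Real.exp (-ε₀ * σ ^ (α-2) * z)) ∧
      (0 ≤ qm σ z ∧ qm σ z ≤ Real.exp (-ε₀ * σ ^ (α-2) * z))) :
    (∃ Cb : ℝ, ∀ᶠ σ in 𝓝[>] (0:ℝ),
      (∫ z in Set.Icc (σ ^ εc) (κ₀ * σ ^ (2*α - 2 - εc)),
          Real.exp z * (qp σ z + qm σ z)
            * ((2 * π * v σ) ^ (-(1:ℝ)/2) * Real.exp (-z^2/(2 * v σ))))
        ≤ Cb * Real.exp (-(ε₀/2) * σ ^ (α - 2 + εc))) ∧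
    Tendsto (fun σ =>
        (∫ z in Set.Icc (σ ^ εc) (κ₀ * σ ^ (2*α - 2 - εc)),
          Real.exp z * (qp σ z + qm σ z)
            * ((2 * π * v σ) ^ (-(1:ℝ)/2) * Real.exp (-z^2/(2 * v σ))))
          / σ ^ (1 - α))
      (𝓝[>] (0:ℝ)) (𝓝 0) := by
  set I : ℝ → ℝ := fun σ => ∫ z in Set.Icc (σ ^ εc) (κ₀ * σ ^ (2*α - 2 - εc)),
    exp z * (qp σ z + qm σ z) * ((2 * π * v σ) ^ (-(1:ℝ)/2) * exp (-z^2/(2 * v σ)))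
  have hrate : ∀ᶠ σ in 𝓝[>] (0:ℝ), 2 ≤ ε₀ * σ ^ (α - 2) :=
    ((tendsto_rpow_neg_nhdsGT_zero (y := α - 2) (by linarith)).const_mul_atTop
      hε₀).eventually_ge_atTop 2
  have hvar : ∀ᶠ σ in 𝓝[>] (0:ℝ), 1 ≤ 2 * π * v σ := by
    filter_upwards [hv, ((tendsto_rpow_neg_nhdsGT_zero (y := 2 * α - 2)
      (by linarith)).const_mul_atTop hc₁).eventually_ge_atTop 1] with σ hvσ hσ
    nlinarith [pi_gt_three]
  have key : ∀ᶠ σ in 𝓝[>] (0:ℝ), 0 ≤ I σ ∧ I σ ≤ 2 * exp (-(ε₀/2) * σ ^ (α - 2 + εc)) := by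
    filter_upwards [hq, hrate, hvar, self_mem_nhdsWithin] with σ hqσ hrσ hvσ (hσ : 0 < σ)
    have hq₀ : ∀ z ∈ Set.Icc (σ ^ εc) (κ₀ * σ ^ (2*α - 2 - εc)), 0 ≤ qp σ z + qm σ z :=
      fun z hz => add_nonneg (hqσ z hz).1.1 (hqσ z hz).2.1
    refine ⟨setIntegral_nonneg measurableSet_Icc fun z hz => ?_, ?_⟩
    · exact mul_nonneg (mul_nonneg (exp_pos z).le (hq₀ z hz))
        (gaussian_density_nonneg (by nlinarith [pi_gt_three]) z)
    · convert setIntegral_exp_mul_gaussian_le zero_le_two hrσ (rpow_nonneg hσ.le _) hvσ hq₀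
        (fun z hz => by simp only [neg_mul] at hqσ ⊢; linarith [hqσ z hz]) using 3
      rw [rpow_add hσ]
      ring
  have hdecay : Tendsto (fun σ => 2 * exp (-(ε₀/2) * σ ^ (α - 2 + εc)) / σ ^ (1 - α))
      (𝓝[>] 0) (𝓝 0) := by
    simpa only [mul_div_assoc, mul_zero] using
      (tendsto_exp_neg_mul_rpow_div_rpow_nhdsGT_zero (p := α - 2 + εc) (by linarith)
        (half_pos hε₀) (1 - α)).const_mul 2
  refine ⟨⟨2, key.mono fun _ h => h.2⟩, squeeze_zero' ?_ ?_ hdecay⟩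
  · filter_upwards [key, self_mem_nhdsWithin] with σ h (hσ : 0 < σ)
    exact div_nonneg h.1 (rpow_pos_of_pos hσ _).le
  · filter_upwards [key, self_mem_nhdsWithin] with σ h (hσ : 0 < σ)
    exact div_le_div_of_nonneg_right h.2 (rpow_pos_of_pos hσ _).le

/-- Negligibility of the symmetric-difference term: with `Z₁ ~ N(0, v_σ)`,
`v_σ = Θ(σ^{2α−2})`, and conditional tail bounds
`P(Z₂ > Λz/σ | Z₁ = ±z) ≤ e^{−ε₀σ^{α−2}z}` on `z ∈ [σ^ε, κ₀σ^{2α−2−ε}]`, the two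
integrals `∫ e^z P(Z₂ > Λz/σ | Z₁ = ±z) p_{Z₁}(z) dz` over that interval are
`O(e^{−(ε₀/2)σ^{α−2+ε}}) = o(σ^{1−α})` as `σ → 0⁺`. -/
theorem stmt_14 (α εc ε₀ κ₀ Λ : ℝ) (hα0 : 0 < α) (hα1 : α < 1)
    (hεc : 0 < εc) (hεc2 : εc < 2 - α) (hε₀ : 0 < ε₀) (hκ₀ : 0 < κ₀) (hΛ : 0 < Λ)
    (v : ℝ → ℝ) (c₁ c₂ : ℝ) (hc₁ : 0 < c₁) (hc₂ : 0 < c₂)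
    (hv : ∀ᶠ σ in 𝓝[>] (0:ℝ), c₁ * σ ^ (2*α - 2) ≤ v σ ∧ v σ ≤ c₂ * σ ^ (2*α - 2))
    (qp qm : ℝ → ℝ → ℝ)
    (hqmeas : ∀ σ, Measurable (qp σ) ∧ Measurable (qm σ))
    (hq : ∀ᶠ σ in 𝓝[>] (0:ℝ), ∀ z ∈ Set.Icc (σ ^ εc) (κ₀ * σ ^ (2*α - 2 - εc)),
      (0 ≤ qp σ z ∧ qp σ z ≤ Real.exp (-ε₀ * σ ^ (α-2) * z)) ∧
      (0 ≤ qm σ z ∧ qm σ z ≤ Real.exp (-ε₀ * σ ^ (α-2) * z))) :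
    (∃ Cb : ℝ, ∀ᶠ σ in 𝓝[>] (0:ℝ),
      (∫ z in Set.Icc (σ ^ εc) (κ₀ * σ ^ (2*α - 2 - εc)),
          Real.exp z * (qp σ z + qm σ z)
            * ((2 * π * v σ) ^ (-(1:ℝ)/2) * Real.exp (-z^2/(2 * v σ))))
        ≤ Cb * Real.exp (-(ε₀/2) * σ ^ (α - 2 + εc))) ∧
    Tendsto (fun σ =>
        (∫ z in Set.Icc (σ ^ εc) (κ₀ * σ ^ (2*α - 2 - εc)),
          Real.exp z * (qp σ z + qm σ z)
            * ((2 * π * v σ) ^ (-(1:ℝ)/2) * Real.exp (-z^2/(2 * v σ))))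
          / σ ^ (1 - α))
      (𝓝[>] (0:ℝ)) (𝓝 0) :=
  stmt_14_general α εc ε₀ κ₀ hα1 hεc2 hε₀ v c₁ c₂ hc₁ hv qp qm hq
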